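/- arXiv:2102.04931 — 2 statements merged into one kernel-verified Lean document; each statement's English description precedes it below -/
import Mathlib

section
/- Let G be a finite simple graph with adjacency matrix (a_{ij}) and fix a configuration of angles θ_1,…,θ_n ∈ ℝ. Then the expected cut under randomized rounding satisfies E(θ) = (1/π)∫_0^π Cut(φ) dφ = (1/(2π)) ∑_{i,j=1}^n a_{ij} d_{S^1}(θ_i, θ_j). -/
open Real Finset MeasureTheory intervalIntegral

/-
Since sin(x - φ) sin(y - φ) = (cos(x - y) - cos(x + y - 2φ)) / 2, the angle φ separates x and y
exactly when cos(x + y - 2φ) > cos(x - y). As φ runs over [0, π), the angle ψ = x + y - 2φ sweeps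
a full period with dφ = dψ / 2, and the set of ψ with cos ψ > cos(x - y) is an arc of length
2 arccos(cos(x - y)) = 2 d(x, y). Each pair therefore contributes d(x, y) to ∫ Cut, and the
theorem follows by linearity of the integral.
-/

/-- The circle distance between angles `x` and `y`:
the minimum over integers `k` of `|x - y - 2πk|`. -/
noncomputable def dS1 (x y : ℝ) : ℝ := ⨅ k : ℤ, |x - y - 2 * Real.pi * k|

/-- The size of the cut induced by the line through the origin at angle `φ`:
half the number of (ordered) adjacent pairs separated by the line. -/
noncomputable def cutAt {n : ℕ} (a : Fin n → Fin n → ℝ) (θ : Fin n → ℝ) (φ : ℝ) : ℝ :=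
  (1 / 2) * ∑ i, ∑ j, a i j *
    (if Real.sin (θ i - φ) * Real.sin (θ j - φ) < 0 then 1 else 0)

/-- The expected cut under randomized rounding of the configuration θ. -/
noncomputable def expCut {n : ℕ} (a : Fin n → Fin n → ℝ) (θ : Fin n → ℝ) : ℝ :=
  (1 / Real.pi) * ∫ φ in (0:ℝ)..Real.pi, cutAt a θ φ

lemma arccos_cos_le_abs (t : ℝ) : arccos (cos t) ≤ |t| := by
  rcases le_or_gt |t| π with h | h
  · rw [← cos_abs, arccos_cos (abs_nonneg t) h]
  · exact (arccos_le_pi _).trans h.le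

lemma dS1_eq_arccos_cos (x y : ℝ) : dS1 x y = arccos (cos (x - y)) := by
  have hcos (k : ℤ) : cos (x - y - 2 * π * k) = cos (x - y) := by
    rw [← cos_sub_int_mul_two_pi (x - y) k]; ring_nf
  refine le_antisymm ?_ (le_ciInf fun k => hcos k ▸ arccos_cos_le_abs _)
  -- the nearest multiple of `2π` realises the infimum
  set k₀ : ℤ := round ((x - y) / (2 * π))
  have hk₀ : |x - y - 2 * π * k₀| ≤ π := by
    have h := abs_sub_round ((x - y) / (2 * π))
    rw [show x - y - 2 * π * k₀ = 2 * π * ((x - y) / (2 * π) - k₀) by field_simp, abs_mul,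
      abs_of_pos two_pi_pos]
    nlinarith [pi_pos]
  calc dS1 x y ≤ |x - y - 2 * π * k₀| :=
        ciInf_le ⟨0, fun _ ⟨k, hk⟩ => hk ▸ abs_nonneg _⟩ k₀
    _ = arccos (cos (x - y)) := by
        rw [← hcos k₀, ← cos_abs, arccos_cos (abs_nonneg _) hk₀]

lemma sin_mul_sin_neg_iff (x y φ : ℝ) :
    sin (x - φ) * sin (y - φ) < 0 ↔ cos (x - y) < cos (x + y - 2 * φ) := by
  have h := cos_sub_cos (x - y) (x + y - 2 * φ)
  rw [show (x - y + (x + y - 2 * φ)) / 2 = x - φ by ring,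
    show (x - y - (x + y - 2 * φ)) / 2 = -(y - φ) by ring, sin_neg] at h
  constructor <;> intro _ <;> nlinarith

lemma intervalIntegrable_ite_one {p : ℝ → Prop} [DecidablePred p] (hp : MeasurableSet {x | p x})
    (a b : ℝ) : IntervalIntegrable (fun x => if p x then (1 : ℝ) else 0) volume a b := by
  have h : (fun x => if p x then (1 : ℝ) else 0) = {x | p x}.indicator 1 := by
    ext x; simp [Set.indicator_apply]
  rw [h, intervalIntegrable_iff]
  exact (integrableOn_const measure_Ioc_lt_top.ne).indicator hp

lemma integral_ite_cos_lt_cos {α : ℝ} (h0 : 0 ≤ α) (hπ : α ≤ π) :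
    ∫ ψ in -π..π, (if cos α < cos ψ then (1 : ℝ) else 0) = 2 * α := by
  have hindicator : Set.EqOn (fun ψ => if cos α < cos ψ then (1 : ℝ) else 0)
      ((Set.Ioo (-α) α).indicator 1) (Set.uIcc (-π) π) := by
    intro ψ hψ
    rw [Set.uIcc_of_le (by linarith [pi_pos])] at hψ
    have habs : |ψ| ∈ Set.Icc 0 π := ⟨abs_nonneg _, abs_le.mpr hψ⟩
    have hiff : cos α < cos ψ ↔ -α < ψ ∧ ψ < α := by
      rw [← cos_abs ψ, strictAntiOn_cos.lt_iff_gt ⟨h0, hπ⟩ habs, abs_lt]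
    simp only [Set.indicator_apply, Set.mem_Ioo, Pi.one_apply, hiff]
  have hsub : Set.Ioo (-α) α ⊆ Set.Ioc (-π) π :=
    fun ψ hψ => ⟨by linarith [hψ.1], by linarith [hψ.2]⟩
  rw [integral_congr hindicator, integral_of_le (by linarith [pi_pos]),
    setIntegral_indicator measurableSet_Ioo, Set.inter_eq_self_of_subset_right hsub, Pi.one_def,
    setIntegral_const, measureReal_def, volume_Ioo, ENNReal.toReal_ofReal (by linarith),
    smul_eq_mul]
  ring

lemma integral_ite_sin_mul_sin_neg (x y : ℝ) :
    ∫ φ in 0..π, (if sin (x - φ) * sin (y - φ) < 0 then (1 : ℝ) else 0) = dS1 x y := by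
  set α := arccos (cos (x - y))
  have hcosα : cos α = cos (x - y) := cos_arccos (neg_one_le_cos _) (cos_le_one _)
  set g : ℝ → ℝ := fun ψ => if cos α < cos ψ then 1 else 0
  have hg : Function.Periodic g (2 * π) := fun ψ => by simp only [g, cos_add_two_pi]
  calc ∫ φ in 0..π, (if sin (x - φ) * sin (y - φ) < 0 then (1 : ℝ) else 0)
      = ∫ φ in 0..π, g (x + y - 2 * φ) :=
        integral_congr fun φ _ => by simp only [g, hcosα, sin_mul_sin_neg_iff]
    _ = (2 : ℝ)⁻¹ * ∫ ψ in x + y - 2 * π..x + y - 2 * π + 2 * π, g ψ := by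
        rw [integral_comp_sub_mul g two_ne_zero, mul_zero, sub_zero, sub_add_cancel, smul_eq_mul]
    _ = (2 : ℝ)⁻¹ * ∫ ψ in -π..-π + 2 * π, g ψ := by rw [hg.intervalIntegral_add_eq]
    _ = dS1 x y := by
        rw [show -π + 2 * π = π by ring, integral_ite_cos_lt_cos (arccos_nonneg _) (arccos_le_pi _),
          dS1_eq_arccos_cos]
        ring

lemma intervalIntegrable_ite_sin_mul_sin_neg (x y a b : ℝ) :
    IntervalIntegrable (fun φ => if sin (x - φ) * sin (y - φ) < 0 then (1 : ℝ) else 0)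
      volume a b :=
  intervalIntegrable_ite_one (measurableSet_lt (by fun_prop) measurable_const) a b

lemma integral_cutAt {n : ℕ} (a : Fin n → Fin n → ℝ) (θ : Fin n → ℝ) :
    ∫ φ in 0..π, cutAt a θ φ = (1 / 2) * ∑ i, ∑ j, a i j * dS1 (θ i) (θ j) := by
  have hterm (i j : Fin n) :=
    (intervalIntegrable_ite_sin_mul_sin_neg (θ i) (θ j) 0 π).const_mul (a i j)
  have hrow (i : Fin n) : IntervalIntegrable (fun φ => ∑ j, a i j *
      (if sin (θ i - φ) * sin (θ j - φ) < 0 then (1 : ℝ) else 0)) volume 0 π := by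
    simpa only [Finset.sum_fn] using IntervalIntegrable.sum univ fun j _ => hterm i j
  simp only [cutAt, intervalIntegral.integral_const_mul]
  rw [integral_finsetSum fun i _ => hrow i]
  simp only [integral_finsetSum fun j _ => hterm _ j, intervalIntegral.integral_const_mul,
    integral_ite_sin_mul_sin_neg]

theorem stmt3_general (n : ℕ) (a : Fin n → Fin n → ℝ)
    (θ : Fin n → ℝ) :
    expCut a θ = (1 / (2 * Real.pi)) * ∑ i, ∑ j, a i j * dS1 (θ i) (θ j) := by
  rw [expCut, integral_cutAt]
  ring

theorem stmt3 (n : ℕ) (a : Fin n → Fin n → ℝ)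
    (hsymm : ∀ i j, a i j = a j i)
    (h01 : ∀ i j, a i j = 0 ∨ a i j = 1)
    (hdiag : ∀ i, a i i = 0)
    (θ : Fin n → ℝ) :
    expCut a θ = (1 / (2 * Real.pi)) * ∑ i, ∑ j, a i j * dS1 (θ i) (θ j) :=
  stmt3_general n a θ
end

section
/- For every ε ∈ (0,1) there exists an admissible function g (i.e. g: ℝ → ℝ is 2π-periodic, even, differentiable, with g(0) = 1 = max g and g(π) = −1 = min g) such that g(x) < 1 whenever d_{S^1}(0,x) > 0 and such that for every x with 0 < d_{S^1}(0,x) ≤ π one has (2/π)·d_{S^1}(0,x)/(1 − g(x)) ≥ 1 − ε. In other words, the approximation constant c(g) of the randomized-rounding guarantee can be made arbitrarily close to 1. -/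
set_option maxHeartbeats 1000000


open Real

/-- `g : ℝ → ℝ` is admissible: 2π-periodic, even, differentiable, with
`g 0 = 1 = max g` and `g π = -1 = min g`. -/
def Admissible (g : ℝ → ℝ) : Prop :=
  Function.Periodic g (2 * Real.pi) ∧ (∀ x, g (-x) = g x) ∧ Differentiable ℝ g ∧
    g 0 = 1 ∧ (∀ x, g x ≤ 1) ∧ g Real.pi = -1 ∧ (∀ x, -1 ≤ g x)

lemma dS1_zero_eq (x : ℝ) :
    dS1 0 x = |x - 2 * Real.pi * round (x / (2 * Real.pi))| := by
  have hpi := Real.pi_pos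
  have h2π : (0:ℝ) < 2 * Real.pi := by positivity
  set r : ℤ := round (x / (2 * Real.pi)) with hr
  have hbd : |x - 2 * Real.pi * r| ≤ Real.pi := by
    have h := abs_sub_round (x / (2 * Real.pi))
    have e : x - 2 * Real.pi * r = 2 * Real.pi * (x / (2 * Real.pi) - r) := by
      field_simp
    rw [e, abs_mul, abs_of_pos h2π]
    nlinarith
  have hbdd : BddBelow (Set.range fun k : ℤ => |0 - x - 2 * Real.pi * k|) := by
    refine ⟨0, ?_⟩
    rintro y ⟨k, rfl⟩
    exact abs_nonneg _
  unfold dS1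
  apply le_antisymm
  · have h := ciInf_le hbdd (-r)
    have e : |(0:ℝ) - x - 2 * Real.pi * ((-r : ℤ) : ℝ)| = |x - 2 * Real.pi * r| := by
      rw [show (0:ℝ) - x - 2 * Real.pi * ((-r : ℤ) : ℝ) = -(x - 2 * Real.pi * r) by
        push_cast; ring, abs_neg]
    rw [e] at h
    exact h
  · apply le_ciInf
    intro k
    have hk : (0 : ℝ) - x - 2 * Real.pi * k = -(x - 2 * Real.pi * ((-k : ℤ) : ℝ)) := by
      push_cast; ring
    rw [hk, abs_neg]
    by_cases hm : (-k : ℤ) = r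
    · rw [hm]
    · have h1 : (1:ℝ) ≤ |((-k : ℤ) : ℝ) - (r:ℝ)| := by
        have h1' : (1:ℤ) ≤ |(-k) - r| := Int.one_le_abs (sub_ne_zero.mpr hm)
        have : ((1:ℤ):ℝ) ≤ ((|(-k) - r| : ℤ) : ℝ) := by exact_mod_cast h1'
        rw [Int.cast_abs] at this
        push_cast at this ⊢
        linarith
      have hdiff : 2 * Real.pi ≤ |(x - 2 * Real.pi * r) - (x - 2 * Real.pi * ((-k : ℤ) : ℝ))| := by
        have e : (x - 2 * Real.pi * r) - (x - 2 * Real.pi * ((-k : ℤ) : ℝ)) =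
            2 * Real.pi * (((-k : ℤ) : ℝ) - (r:ℝ)) := by push_cast; ring
        rw [e, abs_mul, abs_of_pos h2π]
        nlinarith
      have htri : |(x - 2 * Real.pi * r) - (x - 2 * Real.pi * ((-k : ℤ) : ℝ))| ≤
          |x - 2 * Real.pi * r| + |x - 2 * Real.pi * ((-k : ℤ) : ℝ)| := abs_sub _ _
      linarith

lemma sin_sq_half' (x : ℝ) : Real.sin (x/2)^2 = (1 - Real.cos x)/2 := by
  have h := Real.cos_two_mul (x/2)
  have h2 : 2*(x/2) = x := by ring
  rw [h2] at h
  nlinarith [Real.sin_sq_add_cos_sq (x/2)]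

lemma cos_dS1_zero (x : ℝ) : Real.cos (dS1 0 x) = Real.cos x := by
  rw [dS1_zero_eq, Real.cos_abs]
  have e : x - 2 * Real.pi * (round (x / (2 * Real.pi)) : ℤ) =
      x - (round (x / (2 * Real.pi)) : ℤ) * (2 * Real.pi) := by ring
  rw [e, Real.cos_sub_int_mul_two_pi]

theorem stmt14 (ε : ℝ) (hε : ε ∈ Set.Ioo (0:ℝ) 1) :
    ∃ g : ℝ → ℝ, Admissible g ∧
      (∀ x, 0 < dS1 0 x → g x < 1) ∧
      (∀ x, 0 < dS1 0 x → dS1 0 x ≤ Real.pi →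
        (2 / Real.pi) * dS1 0 x / (1 - g x) ≥ 1 - ε) := by
  obtain ⟨hε0, hε1⟩ := hε
  have hpi := Real.pi_pos
  set a : ℝ := Real.pi * (1 - ε) / 2 with ha
  have ha0 : 0 < a := by rw [ha]; nlinarith
  have haπ : a < Real.pi / 2 := by rw [ha]; nlinarith
  set c : ℝ := Real.sin a with hc
  have hc0 : 0 ≤ c := Real.sin_nonneg_of_nonneg_of_le_pi ha0.le (by linarith)
  have hc1 : c < 1 := by
    have h := Real.strictMonoOn_sin (a := a) (b := Real.pi/2)
      ⟨by linarith, by linarith⟩ ⟨by linarith, le_refl _⟩ haπ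
    simpa [Real.sin_pi_div_two] using h
  obtain ⟨n, hn⟩ := exists_pow_lt_of_lt_one (x := 2 / Real.pi) (by positivity) hc1
  set q : ℕ := n + 1 with hq
  have hq1 : 1 ≤ q := Nat.le_add_left 1 n
  set u : ℝ → ℝ := fun x => (1 - Real.cos x) / 2 with hu
  have hu01 : ∀ x, 0 ≤ u x ∧ u x ≤ 1 := by
    intro x
    constructor
    · have := Real.cos_le_one x; simp only [hu]; linarith
    · have := Real.neg_one_le_cos x; simp only [hu]; linarith
  refine ⟨fun x => 1 - 2 * (u x) ^ q, ⟨?_, ?_, ?_, ?_, ?_, ?_, ?_⟩, ?_, ?_⟩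
  · -- periodic
    intro x
    simp only [hu, Real.cos_add_two_pi]
  · -- even
    intro x
    simp only [hu, Real.cos_neg]
  · -- differentiable
    fun_prop
  · -- g 0 = 1
    show (1:ℝ) - 2 * (u 0) ^ q = 1
    simp [hu, Real.cos_zero, zero_pow (by omega : q ≠ 0)]
  · -- g ≤ 1
    intro x
    show (1:ℝ) - 2 * (u x) ^ q ≤ 1
    have h := hu01 x
    have : 0 ≤ (u x) ^ q := pow_nonneg h.1 q
    linarith
  · -- g π = -1
    show (1:ℝ) - 2 * (u Real.pi) ^ q = -1
    simp only [hu, Real.cos_pi]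
    norm_num
  · -- -1 ≤ g
    intro x
    show (-1:ℝ) ≤ 1 - 2 * (u x) ^ q
    have h := hu01 x
    have : (u x) ^ q ≤ 1 := pow_le_one₀ h.1 h.2
    linarith
  · -- g x < 1 when dS1 0 x > 0
    intro x hx
    show (1:ℝ) - 2 * (u x) ^ q < 1
    have hcos : Real.cos x < 1 := by
      rcases lt_or_eq_of_le (Real.cos_le_one x) with h | h
      · exact h
      · exfalso
        obtain ⟨m, hm⟩ := (Real.cos_eq_one_iff x).mp h
        have hd0 : dS1 0 x = 0 := by
          rw [dS1_zero_eq]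
          have hx2 : x / (2 * Real.pi) = (m : ℝ) := by
            rw [← hm]; field_simp
          rw [hx2]
          rw [round_intCast]
          rw [← hm]
          rw [show (m:ℝ) * (2 * Real.pi) - 2 * Real.pi * (m:ℝ) = 0 by ring, abs_zero]
        linarith
    have hux : 0 < u x := by simp only [hu]; linarith
    have : 0 < (u x) ^ q := pow_pos hux q
    linarith
  · -- main inequality
    intro x hd hdπ
    show (2 / Real.pi) * dS1 0 x / (1 - (1 - 2 * (u x) ^ q)) ≥ 1 - ε
    have hcos : Real.cos x = Real.cos (dS1 0 x) := (cos_dS1_zero x).symm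
    obtain ⟨d, hdd⟩ : ∃ d, dS1 0 x = d := ⟨_, rfl⟩
    rw [hdd] at hcos hd hdπ ⊢
    have hud : u x = Real.sin (d/2) ^ 2 := by
      simp only [hu, hcos, sin_sq_half']
    have hsin_pos : 0 < Real.sin (d/2) :=
      Real.sin_pos_of_pos_of_lt_pi (by linarith) (by linarith)
    have hux : 0 < u x := by rw [hud]; positivity
    have huxq : 0 < (u x) ^ q := pow_pos hux q
    have hgpos : 0 < 1 - (1 - 2 * (u x) ^ q) := by linarith
    rw [ge_iff_le, le_div_iff₀ hgpos]
    have hgoal : (1 - ε) * (2 * (u x) ^ q) ≤ 2 / Real.pi * d := by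
      rw [hud]
      set t : ℝ := d / 2 with ht
      have ht0 : 0 < t := by rw [ht]; linarith
      have htπ : t ≤ Real.pi / 2 := by rw [ht]; linarith
      clear_value t
      have hsin_le_one : Real.sin t ≤ 1 := Real.sin_le_one t
      have hsin_nonneg : 0 ≤ Real.sin t := hsin_pos.le
      have hsq1 : Real.sin t ^ 2 ≤ 1 := by nlinarith
      have hsq0 : 0 ≤ Real.sin t ^ 2 := sq_nonneg _
      have hd2 : d = 2 * t := by rw [ht]; ring
      rw [hd2]
      by_cases hcase : 1 - ε ≤ 2 * t / Real.pi
      · have hpow : (Real.sin t ^ 2) ^ q ≤ 1 := pow_le_one₀ hsq0 hsq1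
        have h1 : (1 - ε) * (2 * (Real.sin t ^ 2) ^ q) ≤ (1 - ε) * 2 := by
          have := mul_le_mul_of_nonneg_left hpow (by linarith : (0:ℝ) ≤ 2 * (1 - ε))
          nlinarith [pow_nonneg hsq0 q]
        have h2 : (1 - ε) * 2 ≤ 2 / Real.pi * (2 * t) := by
          rw [le_div_iff₀ hpi] at hcase
          rw [div_mul_eq_mul_div, le_div_iff₀ hpi]
          nlinarith
        linarith
      · push_neg at hcase
        have hta : t < a := by
          rw [div_lt_iff₀ hpi] at hcase
          rw [ha]
          nlinarith
        have hsc : Real.sin t ≤ c := by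
          rw [hc]
          exact (Real.strictMonoOn_sin ⟨by linarith, by linarith⟩
            ⟨by linarith, by linarith⟩ hta).le
        have hst : Real.sin t ≤ t := Real.sin_le ht0.le
        have hkey : (Real.sin t ^ 2) ^ q ≤ t * c ^ n := by
          have e1 : (Real.sin t ^ 2) ^ q = Real.sin t * Real.sin t ^ (2 * q - 1) := by
            have hqe : 2 * q = (2 * q - 1) + 1 := by omega
            rw [← pow_mul]
            conv_lhs => rw [hqe]
            rw [pow_succ']
          rw [e1]
          have h2 : Real.sin t ^ (2 * q - 1) ≤ c ^ (2 * q - 1) :=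
            pow_le_pow_left₀ hsin_nonneg hsc _
          have h3 : c ^ (2 * q - 1) ≤ c ^ n :=
            pow_le_pow_of_le_one hc0 hc1.le (by omega)
          have h4 : Real.sin t * Real.sin t ^ (2 * q - 1) ≤ t * Real.sin t ^ (2 * q - 1) :=
            mul_le_mul_of_nonneg_right hst (pow_nonneg hsin_nonneg _)
          have h5 : t * Real.sin t ^ (2 * q - 1) ≤ t * c ^ n :=
            mul_le_mul_of_nonneg_left (h2.trans h3) ht0.le
          linarith
        have hA : (1 - ε) * (2 * (Real.sin t ^ 2) ^ q) ≤ 2 * (t * c ^ n) := by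
          have h6 : (1 - ε) * (2 * (Real.sin t ^ 2) ^ q) ≤ 1 * (2 * (Real.sin t ^ 2) ^ q) := by
            apply mul_le_mul_of_nonneg_right (by linarith)
            positivity
          have h7 : (2:ℝ) * (Real.sin t ^ 2) ^ q ≤ 2 * (t * c ^ n) := by linarith
          linarith
        have hB : 2 * (t * c ^ n) ≤ 2 / Real.pi * (2 * t) := by
          have h8 : c ^ n * (2 * t) ≤ (2 / Real.pi) * (2 * t) :=
            mul_le_mul_of_nonneg_right hn.le (by linarith)
          nlinarith
        linarith
    linarith
end
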